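/- (Proposition 3) Let U and V be tied incomplete rankings on {1,…,n} with consistent sets S = S_U and R = S_V. For a tied incomplete ranking W with k_W ranked items and distinct i, j ∈ {1,…,n}, define p_{ij}(W) as follows: if both i and j are ranked in W with τ_W(i) ≠ τ_W(j), then p_{ij}(W) = 1 if τ_W(i) < τ_W(j) and 0 otherwise; if only i is ranked, p_{ij}(W) = 1 − (τ_W(i) + (φ_W(i)−1)/2)/(k_W + 1); if only j is ranked, p_{ij}(W) = (τ_W(j) + (φ_W(j)−1)/2)/(k_W + 1); otherwise (both unranked, or both ranked and tied) p_{ij}(W) = 1/2. Then the average Kendall tau distance satisfies (1/(|S||R|)) Σ_{π∈S} Σ_{σ∈R} T(π,σ) = n(n−1)/4 − (1/2) Σ_{1 ≤ i < j ≤ n} (1 − 2p_{ij}(U))(1 − 2p_{ij}(V)). -/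

import Mathlib

/-- A tied incomplete ranking on `{1,…,n}`: a sequence `A 0, …, A (K-1)` of nonempty
pairwise disjoint subsets of `Fin n`; all items in `A s` are preferred to all items
in `A t` for `s < t`. -/
structure TIR (n : ℕ) where
  K : ℕ
  A : Fin K → Finset (Fin n)
  nonempty : ∀ s, (A s).Nonempty
  disjoint : ∀ s t, s ≠ t → Disjoint (A s) (A t)

/-- The set of permutations consistent with a tied incomplete ranking `U`. -/
def TIR.consistent {n : ℕ} (U : TIR n) : Finset (Equiv.Perm (Fin n)) :=
  Finset.univ.filter (fun π => ∀ s t : Fin U.K, s < t →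
    ∀ a ∈ U.A s, ∀ b ∈ U.A t, π a < π b)

/-- The set `B_U` of items ranked by `U`. -/
def TIR.ranked {n : ℕ} (U : TIR n) : Finset (Fin n) :=
  Finset.univ.biUnion U.A

/-- Kendall's tau distance between two permutations of `Fin n`. -/
def kendall {n : ℕ} (π σ : Equiv.Perm (Fin n)) : ℕ :=
  (Finset.univ.filter (fun p : Fin n × Fin n =>
    p.1 < p.2 ∧ ((π p.1 < π p.2) ↔ ¬ (σ p.1 < σ p.2)))).card

/-- `τ_W(i)`: for a ranked item `i ∈ A s`, this is `1 + |A 1| + ⋯ + |A (s-1)|`, the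
minimal relative rank of `i` among the ranked items. -/
def TIR.tau {n : ℕ} (W : TIR n) (i : Fin n) : ℕ :=
  1 + ∑ s ∈ Finset.univ.filter
        (fun s : Fin W.K => ∃ t : Fin W.K, s < t ∧ i ∈ W.A t), (W.A s).card

/-- `φ_W(i)`: for a ranked item `i ∈ A s`, the size `|A s|` of its block (number of
items tied with `i`, including `i` itself). -/
def TIR.phi {n : ℕ} (W : TIR n) (i : Fin n) : ℕ :=
  ∑ s ∈ Finset.univ.filter (fun s : Fin W.K => i ∈ W.A s), (W.A s).card

/-- The probability `p_{ij}(W)` that item `i` is preferred to item `j` under the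
uniform distribution over permutations consistent with `W`, as given in Proposition 3:
if both are ranked with `τ_W(i) ≠ τ_W(j)` it is the indicator of `τ_W(i) < τ_W(j)`;
if only `i` is ranked it is `1 − (τ_W(i) + (φ_W(i)−1)/2)/(k_W+1)`;
if only `j` is ranked it is `(τ_W(j) + (φ_W(j)−1)/2)/(k_W+1)`;
otherwise it is `1/2`. -/
def TIR.pij {n : ℕ} (W : TIR n) (i j : Fin n) : ℚ :=
  if i ∈ W.ranked then
    if j ∈ W.ranked then
      if W.tau i = W.tau j then 1 / 2
      else if W.tau i < W.tau j then 1 else 0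
    else 1 - ((W.tau i : ℚ) + ((W.phi i : ℚ) - 1) / 2) / ((W.ranked.card : ℚ) + 1)
  else
    if j ∈ W.ranked then
      ((W.tau j : ℚ) + ((W.phi j : ℚ) - 1) / 2) / ((W.ranked.card : ℚ) + 1)
    else 1 / 2


/-!
By linearity, the average distance is the sum over pairs `i < j` of the probability that
independent uniform `π ∈ S` and `σ ∈ R` order `i` and `j` differently, which is
`p (1 - q) + (1 - p) q = 1/2 - (1 - 2p)(1 - 2q)/2` when `p` and `q` are the probabilities
of `π i < π j` and `σ i < σ j`. So it suffices to show that `p = p_{ij}(U)`.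

For items in different blocks `p` is `0` or `1`; for two tied or two unranked items it is
`1/2`, since composing with their transposition is an involution of `S`. For an unranked `u`
and a ranked `i ∈ A_s`, the number of ranked items placed before `u` is uniform on
`{0, …, k}`: swapping `u` with the ranked item of rank `r` exchanges the fibres `r` and
`r + 1`. The items of `A_s` are exchangeable and occupy the ranks `τ - 1, …, τ + φ - 2`, so
`P(u before i) = (1/φ) ∑_r (r + 1)/(k + 1) = (τ + (φ - 1)/2)/(k + 1)`.
-/
open Finset Equiv

theorem Finset.image_eq_of_injOn_of_card_le {α β : Type*} [DecidableEq β] {s : Finset α}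
    {t : Finset β} {f : α → β} (hf : Set.InjOn f s) (hmaps : ∀ x ∈ s, f x ∈ t)
    (hcard : #t ≤ #s) : s.image f = t :=
  eq_of_subset_of_card_le (image_subset_iff.mpr hmaps) (by rwa [card_image_of_injOn hf])

theorem Finset.two_mul_sum_range_card_filter_Ico_le {p m k : ℕ} (hk : p + m ≤ k) :
    2 * ∑ q ∈ range (k + 1), #{r ∈ Ico p (p + m) | q ≤ r} = m * (2 * p + m + 1) := by
  have hcount : ∀ r ∈ Ico p (p + m), #{q ∈ range (k + 1) | q ≤ r} = r + 1 := by
    intro r hr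
    rw [← card_range (r + 1)]
    congr 1
    ext q
    simp only [mem_filter, mem_range]
    have := (mem_Ico.mp hr).2
    omega
  simp_rw [card_filter]
  rw [sum_comm]
  simp_rw [← card_filter]
  rw [sum_congr rfl hcount]
  clear hcount hk
  induction m with
  | zero => simp
  | succ m ih =>
    rw [← add_assoc, sum_Ico_succ_top (by omega), mul_add, ih]
    ring

namespace TIR

variable {n : ℕ} (U : TIR n)

def blockOffset (s : Fin U.K) : ℕ :=
  ∑ t with t < s, #(U.A t)

def rank (π : Perm (Fin n)) (x : Fin n) : ℕ :=
  #{b ∈ U.ranked | π b < π x}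

variable {U} {π : Perm (Fin n)}

theorem mem_ranked {i : Fin n} : i ∈ U.ranked ↔ ∃ s, i ∈ U.A s := by
  simp [TIR.ranked]

theorem mem_ranked_of_mem {i : Fin n} {s : Fin U.K} (h : i ∈ U.A s) : i ∈ U.ranked :=
  mem_ranked.mpr ⟨s, h⟩

theorem mem_consistent {π : Perm (Fin n)} :
    π ∈ U.consistent ↔
      ∀ s t : Fin U.K, s < t → ∀ a ∈ U.A s, ∀ b ∈ U.A t, π a < π b := by
  simp [TIR.consistent]

theorem eq_of_mem_A {i : Fin n} {s t : Fin U.K} (hs : i ∈ U.A s) (ht : i ∈ U.A t) : s = t := by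
  by_contra h
  exact disjoint_left.mp (U.disjoint s t h) hs ht

theorem tau_eq_of_mem {i : Fin n} {s : Fin U.K} (h : i ∈ U.A s) :
    U.tau i = U.blockOffset s + 1 := by
  rw [TIR.tau, blockOffset, add_comm]
  congr 2
  ext t
  simp only [mem_filter, mem_univ, true_and]
  exact ⟨fun ⟨t', hlt, hi⟩ => eq_of_mem_A hi h ▸ hlt, fun hlt => ⟨s, hlt, h⟩⟩

theorem phi_eq_of_mem {i : Fin n} {s : Fin U.K} (h : i ∈ U.A s) : U.phi i = #(U.A s) := by
  rw [TIR.phi, Finset.sum_eq_single_of_mem s (by simpa using h)]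
  intro t ht hts
  exact absurd (eq_of_mem_A (mem_filter.mp ht).2 h) hts

theorem blockOffset_add_card_le_of_le {s t : Fin U.K} (h : s ≤ t) :
    U.blockOffset s + #(U.A s) ≤ ∑ r with r ≤ t, #(U.A r) := by
  have hs : s ∉ ({r | r < s} : Finset (Fin U.K)) := by simp
  calc U.blockOffset s + #(U.A s) = ∑ r ∈ insert s ({r | r < s} : Finset _), #(U.A r) := by
        rw [sum_insert hs, blockOffset, add_comm]
    _ ≤ _ := sum_le_sum_of_subset fun r hr => by
        simp only [mem_insert, mem_filter, mem_univ, true_and] at hr ⊢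
        rcases hr with rfl | hr
        exacts [h, hr.le.trans h]

theorem blockOffset_strictMono : StrictMono U.blockOffset := fun s t h =>
  calc U.blockOffset s < U.blockOffset s + #(U.A s) := by
        simpa using (U.nonempty s).card_pos
    _ ≤ ∑ r with r ≤ s, #(U.A r) := blockOffset_add_card_le_of_le le_rfl
    _ ≤ U.blockOffset t := sum_le_sum_of_subset fun r hr => by
        simp only [mem_filter, mem_univ, true_and] at hr ⊢
        exact hr.trans_lt h

theorem card_filter_ranked (P : Fin n → Prop) [DecidablePred P] :
    #{b ∈ U.ranked | P b} = ∑ s, #{b ∈ U.A s | P b} := by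
  rw [TIR.ranked, filter_biUnion, card_biUnion]
  exact fun s _ t _ hst => disjoint_filter_filter (U.disjoint s t hst)

theorem card_ranked : #U.ranked = ∑ s, #(U.A s) := by
  simpa using card_filter_ranked (U := U) (fun _ => True)

theorem blockOffset_add_card_le (s : Fin U.K) : U.blockOffset s + #(U.A s) ≤ #U.ranked := by
  rw [card_ranked]
  simpa using (blockOffset_add_card_le_of_le (le_refl s)).trans
    (sum_le_sum_of_subset (filter_subset _ _))

theorem consistent_nonempty (U : TIR n) : U.consistent.Nonempty := by
  classical
  let block (x : Fin n) : ℕ := if h : ∃ s, x ∈ U.A s then h.choose else 0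
  have block_eq {s : Fin U.K} {x : Fin n} (hx : x ∈ U.A s) : block x = s := by
    have h : ∃ s, x ∈ U.A s := ⟨s, hx⟩
    simp only [block, dif_pos h, eq_of_mem_A h.choose_spec hx]
  -- sorting the items by block index is a linear extension of the ranking
  refine ⟨(Tuple.sort block)⁻¹, mem_consistent.mpr fun s t hst a ha b hb => ?_⟩
  by_contra hba
  have := Tuple.monotone_sort block (not_lt.mp hba)
  simp only [Function.comp_apply, Perm.coe_inv, apply_symm_apply, block_eq ha,
    block_eq hb] at this
  exact absurd hst (not_lt.mpr (Fin.le_iff_val_le_val.mpr this))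

theorem mul_swap_mem_consistent {a b : Fin n} (hab : ∀ s, ∀ x ∈ U.A s, swap a b x ∈ U.A s)
    {π : Perm (Fin n)} (hπ : π ∈ U.consistent) : π * swap a b ∈ U.consistent :=
  mem_consistent.mpr fun s t hst x hx y hy =>
    mem_consistent.mp hπ s t hst _ (hab s x hx) _ (hab t y hy)

theorem swap_mem_A_of_mem_A {a b : Fin n} {s : Fin U.K} (ha : a ∈ U.A s) (hb : b ∈ U.A s) :
    ∀ t, ∀ x ∈ U.A t, swap a b x ∈ U.A t := by
  intro t x hx
  by_cases hxa : x = a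
  · subst hxa
    rwa [swap_apply_left, eq_of_mem_A hx ha]
  by_cases hxb : x = b
  · subst hxb
    rwa [swap_apply_right, eq_of_mem_A hx hb]
  rwa [swap_apply_of_ne_of_ne hxa hxb]

theorem swap_mem_A_of_notMem_ranked {a b : Fin n} (ha : a ∉ U.ranked) (hb : b ∉ U.ranked) :
    ∀ t, ∀ x ∈ U.A t, swap a b x ∈ U.A t := by
  intro t x hx
  have hxa : x ≠ a := fun h => ha (h ▸ mem_ranked_of_mem hx)
  have hxb : x ≠ b := fun h => hb (h ▸ mem_ranked_of_mem hx)
  rwa [swap_apply_of_ne_of_ne hxa hxb]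

theorem card_filter_mul_swap {a b : Fin n} (hab : ∀ s, ∀ x ∈ U.A s, swap a b x ∈ U.A s)
    (P : Perm (Fin n) → Prop) [DecidablePred P] :
    #{π ∈ U.consistent | P (π * swap a b)} = #{π ∈ U.consistent | P π} := by
  refine card_nbij' (· * swap a b) (· * swap a b) ?_ ?_ ?_ ?_
  · intro π hπ
    simp only [mem_coe, mem_filter] at hπ ⊢
    exact ⟨mul_swap_mem_consistent hab hπ.1, hπ.2⟩
  · intro π hπ
    simp only [mem_coe, mem_filter, mul_swap_mul_self] at hπ ⊢
    exact ⟨mul_swap_mem_consistent hab hπ.1, hπ.2⟩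
  all_goals exact fun π _ => mul_swap_mul_self a b π

theorem card_filter_lt_add_card_filter_gt {a b : Fin n} (hab : a ≠ b) :
    #{π ∈ U.consistent | π a < π b} + #{π ∈ U.consistent | π b < π a} =
      #U.consistent := by
  rw [← card_filter_add_card_filter_not (s := U.consistent)
    (fun π : Perm (Fin n) => π a < π b)]
  congr 2 with π
  simp only [mem_filter, not_lt, and_congr_right_iff]
  exact fun _ => ⟨le_of_lt, fun h => h.lt_of_ne (π.injective.ne hab.symm)⟩

theorem two_mul_card_filter_lt_of_swap {a b : Fin n} (hab : a ≠ b)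
    (hswap : ∀ s, ∀ x ∈ U.A s, swap a b x ∈ U.A s) :
    2 * #{π ∈ U.consistent | π a < π b} = #U.consistent := by
  have hsym := card_filter_mul_swap hswap (fun π => π a < π b)
  simp only [Perm.mul_apply, swap_apply_left, swap_apply_right] at hsym
  rw [← card_filter_lt_add_card_filter_gt hab, ← hsym]
  ring

theorem rank_le_rank {x y : Fin n} (h : π x ≤ π y) : U.rank π x ≤ U.rank π y :=
  card_le_card (monotone_filter_right _ fun _ _ hb => hb.trans_le h)

theorem rank_lt_rank {c x : Fin n} (hc : c ∈ U.ranked) (h : π c < π x) :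
    U.rank π c < U.rank π x :=
  card_lt_card ⟨monotone_filter_right _ fun _ _ hb => hb.trans h,
    fun hsub => lt_irrefl _ (mem_filter.mp (hsub (mem_filter.mpr ⟨hc, h⟩))).2⟩

theorem lt_iff_rank_lt {c x : Fin n} (hc : c ∈ U.ranked) :
    π c < π x ↔ U.rank π c < U.rank π x := by
  refine ⟨rank_lt_rank hc, fun h => ?_⟩
  by_contra hle
  exact (rank_le_rank (not_lt.mp hle)).not_gt h

theorem lt_iff_rank_le {u b : Fin n} (hu : u ∉ U.ranked) (hb : b ∈ U.ranked) :
    π u < π b ↔ U.rank π u ≤ U.rank π b := by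
  have hbu : b ≠ u := fun h => hu (h ▸ hb)
  rw [← not_lt, ← lt_iff_rank_lt hb, not_lt]
  exact ⟨le_of_lt, fun h => h.lt_of_ne (π.injective.ne hbu.symm)⟩

theorem rank_injOn : Set.InjOn (U.rank π) U.ranked := by
  intro a ha b hb h
  by_contra hab
  rcases lt_or_gt_of_ne (π.injective.ne hab) with hlt | hlt
  exacts [(rank_lt_rank ha hlt).ne h, (rank_lt_rank hb hlt).ne' h]

theorem image_rank_ranked : U.ranked.image (U.rank π) = range #U.ranked :=
  image_eq_of_injOn_of_card_le rank_injOn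
    (fun b hb => mem_range.mpr (card_lt_card (filter_ssubset.mpr ⟨b, hb, lt_irrefl (π b)⟩)))
    (card_range _).le

theorem rank_eq_blockOffset_add (hπ : π ∈ U.consistent) {i : Fin n} {s : Fin U.K}
    (hi : i ∈ U.A s) : U.rank π i = U.blockOffset s + #{b ∈ U.A s | π b < π i} := by
  rw [rank, card_filter_ranked, ← sum_filter_add_sum_filter_not univ (· < s)]
  congr 1
  · refine sum_congr rfl fun t ht => congrArg card (filter_true_of_mem fun b hb => ?_)
    exact mem_consistent.mp hπ t s (mem_filter.mp ht).2 b hb i hi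
  · rw [sum_eq_single_of_mem s (by simp)]
    intro t ht hts
    have hst : s < t := lt_of_le_of_ne (not_lt.mp (mem_filter.mp ht).2) (Ne.symm hts)
    exact card_eq_zero.mpr (filter_eq_empty_iff.mpr fun b hb =>
      (mem_consistent.mp hπ s t hst i hi b hb).not_gt)

theorem image_rank_A (hπ : π ∈ U.consistent) (s : Fin U.K) :
    (U.A s).image (U.rank π) = Ico (U.blockOffset s) (U.blockOffset s + #(U.A s)) := by
  refine image_eq_of_injOn_of_card_le (rank_injOn.mono fun b hb => mem_ranked_of_mem hb)
    (fun i hi => ?_) (by simp)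
  rw [rank_eq_blockOffset_add hπ hi, mem_Ico]
  exact ⟨le_add_right le_rfl, Nat.add_lt_add_left
    (card_lt_card (filter_ssubset.mpr ⟨i, hi, lt_irrefl (π i)⟩)) _⟩

theorem card_filter_lt_A_eq (hπ : π ∈ U.consistent) {u : Fin n} (hu : u ∉ U.ranked)
    (s : Fin U.K) :
    #{b ∈ U.A s | π u < π b} =
      #{r ∈ Ico (U.blockOffset s) (U.blockOffset s + #(U.A s)) | U.rank π u ≤ r} := by
  rw [← image_rank_A hπ, filter_image,
    card_image_of_injOn (rank_injOn.mono fun b hb => mem_ranked_of_mem (mem_filter.mp hb).1)]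
  exact congrArg card (filter_congr fun b hb => lt_iff_rank_le hu (mem_ranked_of_mem hb))

theorem rank_eq_rank_add_of_adjacent {b x : Fin n} (hb : b ∈ U.ranked)
    (hadj : ∀ c ∈ U.ranked, c ≠ b → (π c < π x ↔ π c < π b)) :
    U.rank π x = U.rank π b + if π b < π x then 1 else 0 := by
  have hsplit : ∀ c ∈ U.ranked, (if π c < π x then 1 else 0) =
      (if π c < π b then 1 else 0) + if c = b then (if π b < π x then 1 else 0) else 0 := by
    intro c hc
    by_cases hcb : c = b
    · simp [hcb]
    · simp [hcb, hadj c hc hcb]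
  rw [rank, rank, card_filter, card_filter, sum_congr rfl hsplit, sum_add_distrib,
    sum_ite_eq', if_pos hb]

theorem adjacent_of_rank {u b : Fin n} (hb : b ∈ U.ranked)
    (hr : U.rank π u = U.rank π b ∨ U.rank π u = U.rank π b + 1) :
    ∀ c ∈ U.ranked, c ≠ b → (π c < π u ↔ π c < π b) := by
  intro c hc hcb
  have := (rank_injOn (U := U) (π := π)).ne hc hb hcb
  rw [lt_iff_rank_lt hc, lt_iff_rank_lt hc]
  omega

theorem mul_swap_mem_consistent_of_adjacent {u b : Fin n} (hu : u ∉ U.ranked)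
    (hb : b ∈ U.ranked) (hadj : ∀ c ∈ U.ranked, c ≠ b → (π c < π u ↔ π c < π b))
    (hπ : π ∈ U.consistent) : π * swap u b ∈ U.consistent := by
  refine mem_consistent.mpr fun s t hst x hx y hy => ?_
  have hxy : π x < π y := mem_consistent.mp hπ s t hst x hx y hy
  have hyx : y ≠ x := fun h => (h ▸ hxy).false
  have hfix : ∀ c ∈ U.ranked, c ≠ b → (π * swap u b) c = π c := fun c hc hcb =>
    congrArg π (swap_apply_of_ne_of_ne (fun h => hu (h ▸ hc)) hcb)
  have hb' : (π * swap u b) b = π u := congrArg π (swap_apply_right u b)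
  by_cases hxb : x = b
  · subst hxb
    rw [hb', hfix y (mem_ranked_of_mem hy) hyx]
    have hyu : ¬π y < π u := fun h => hxy.not_gt ((hadj y (mem_ranked_of_mem hy) hyx).mp h)
    exact (not_lt.mp hyu).lt_of_ne (π.injective.ne fun h => hu (h ▸ mem_ranked_of_mem hy))
  rw [hfix x (mem_ranked_of_mem hx) hxb]
  by_cases hyb : y = b
  · subst hyb
    exact hb' ▸ (hadj x (mem_ranked_of_mem hx) hxb).mpr hxy
  rw [hfix y (mem_ranked_of_mem hy) hyb]
  exact hxy

theorem rank_mul_swap_of_adjacent {u b : Fin n} (hu : u ∉ U.ranked) (hb : b ∈ U.ranked)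
    (hadj : ∀ c ∈ U.ranked, c ≠ b → (π c < π u ↔ π c < π b)) :
    U.rank (π * swap u b) b = U.rank π b ∧
      U.rank (π * swap u b) u + U.rank π u = 2 * U.rank π b + 1 := by
  have hfix : ∀ c ∈ U.ranked, c ≠ b → (π * swap u b) c = π c := fun c hc hcb =>
    congrArg π (swap_apply_of_ne_of_ne (fun h => hu (h ▸ hc)) hcb)
  have hu' : (π * swap u b) u = π b := congrArg π (swap_apply_left u b)
  have hb' : (π * swap u b) b = π u := congrArg π (swap_apply_right u b)
  have hrank_b : U.rank (π * swap u b) b = U.rank π b := by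
    refine congrArg card (filter_congr fun c hc => ?_)
    by_cases hcb : c = b
    · simp [hcb]
    · rw [hfix c hc hcb, hb', hadj c hc hcb]
  have hadj' : ∀ c ∈ U.ranked, c ≠ b →
      ((π * swap u b) c < (π * swap u b) u ↔ (π * swap u b) c < (π * swap u b) b) := by
    intro c hc hcb
    rw [hfix c hc hcb, hu', hb', hadj c hc hcb]
  refine ⟨hrank_b, ?_⟩
  rw [rank_eq_rank_add_of_adjacent hb hadj, rank_eq_rank_add_of_adjacent hb hadj', hu', hb',
    hrank_b]
  have hbu : b ≠ u := fun h => hu (h ▸ hb)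
  rcases lt_or_gt_of_ne (π.injective.ne hbu) with h | h <;> simp [h, h.not_gt] <;> ring

theorem card_filter_rank_eq_succ {u : Fin n} (hu : u ∉ U.ranked) {q : ℕ} (hq : q < #U.ranked) :
    #{π ∈ U.consistent | U.rank π u = q} = #{π ∈ U.consistent | U.rank π u = q + 1} := by
  classical
  have hex (π : Perm (Fin n)) : ∃ b ∈ U.ranked, U.rank π b = q := by
    have : q ∈ U.ranked.image (U.rank π) := image_rank_ranked ▸ mem_range.mpr hq
    simpa using this
  -- `pick π` is the ranked item of rank `q`; swapping it with `u` is an involution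
  -- exchanging the two fibres
  let pick (π : Perm (Fin n)) : Fin n := (hex π).choose
  have pick_mem (π) : pick π ∈ U.ranked := (hex π).choose_spec.1
  have rank_pick (π) : U.rank π (pick π) = q := (hex π).choose_spec.2
  have pick_eq {π b} (hb : b ∈ U.ranked) (h : U.rank π b = q) : pick π = b :=
    rank_injOn (pick_mem π) hb ((rank_pick π).trans h.symm)
  have step {π} (hπ : π ∈ U.consistent) (hr : U.rank π u = q ∨ U.rank π u = q + 1) :
      π * swap u (pick π) ∈ U.consistent ∧ pick (π * swap u (pick π)) = pick π ∧
        U.rank (π * swap u (pick π)) u + U.rank π u = 2 * q + 1 := by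
    have hadj := adjacent_of_rank (u := u) (pick_mem π) (by rwa [rank_pick])
    obtain ⟨hrank_b, hsum⟩ := rank_mul_swap_of_adjacent hu (pick_mem π) hadj
    exact ⟨mul_swap_mem_consistent_of_adjacent hu (pick_mem π) hadj hπ,
      pick_eq (pick_mem π) (hrank_b.trans (rank_pick π)), rank_pick π ▸ hsum⟩
  refine card_nbij' (fun π => π * swap u (pick π)) (fun π => π * swap u (pick π))
    ?_ ?_ ?_ ?_
  · intro π hπ
    simp only [mem_coe, mem_filter] at hπ ⊢
    obtain ⟨hS, -, hsum⟩ := step hπ.1 (.inl hπ.2)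
    exact ⟨hS, by omega⟩
  · intro π hπ
    simp only [mem_coe, mem_filter] at hπ ⊢
    obtain ⟨hS, -, hsum⟩ := step hπ.1 (.inr hπ.2)
    exact ⟨hS, by omega⟩
  · intro π hπ
    simp only [mem_coe, mem_filter] at hπ
    simp only [(step hπ.1 (.inl hπ.2)).2.1, mul_swap_mul_self]
  · intro π hπ
    simp only [mem_coe, mem_filter] at hπ
    simp only [(step hπ.1 (.inr hπ.2)).2.1, mul_swap_mul_self]

theorem card_filter_rank_eq_zero {u : Fin n} (hu : u ∉ U.ranked) {q : ℕ}
    (hq : q ≤ #U.ranked) :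
    #{π ∈ U.consistent | U.rank π u = q} = #{π ∈ U.consistent | U.rank π u = 0} := by
  induction q with
  | zero => rfl
  | succ q ih => rw [← card_filter_rank_eq_succ hu hq, ih (by omega)]

theorem sum_consistent_comp_rank {u : Fin n} (hu : u ∉ U.ranked) (f : ℕ → ℕ) :
    ∑ π ∈ U.consistent, f (U.rank π u) =
      #{π ∈ U.consistent | U.rank π u = 0} * ∑ q ∈ range (#U.ranked + 1), f q := by
  rw [← sum_fiberwise_of_maps_to (t := range (#U.ranked + 1)) (g := (U.rank · u))
    fun π _ => mem_range.mpr (Nat.lt_succ_of_le (card_le_card (filter_subset _ _))), mul_sum]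
  refine sum_congr rfl fun q hq => ?_
  rw [sum_congr rfl fun π hπ => congrArg f (mem_filter.mp hπ).2, sum_const, smul_eq_mul,
    card_filter_rank_eq_zero hu (Nat.lt_succ_iff.mp (mem_range.mp hq))]

theorem two_mul_card_filter_unranked_lt {u i : Fin n} {s : Fin U.K} (hu : u ∉ U.ranked)
    (hi : i ∈ U.A s) :
    2 * (#U.ranked + 1) * #{π ∈ U.consistent | π u < π i} =
      (2 * U.blockOffset s + #(U.A s) + 1) * #U.consistent := by
  set d := #{π ∈ U.consistent | U.rank π u = 0}
  have hne {b : Fin n} (hb : b ∈ U.A s) : u ≠ b := fun h => hu (h ▸ mem_ranked_of_mem hb)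
  -- all items of a block are equally likely to follow `u`
  have hsym : ∀ b ∈ U.A s,
      #{π ∈ U.consistent | π u < π b} = #{π ∈ U.consistent | π u < π i} :=
    fun b hb => by
      simpa [swap_apply_of_ne_of_ne (hne hi) (hne hb)] using
        card_filter_mul_swap (swap_mem_A_of_mem_A hi hb) (fun π => π u < π i)
  have hblock : #(U.A s) * #{π ∈ U.consistent | π u < π i} =
      d * ∑ q ∈ range (#U.ranked + 1),
        #{r ∈ Ico (U.blockOffset s) (U.blockOffset s + #(U.A s)) | q ≤ r} :=
    calc #(U.A s) * #{π ∈ U.consistent | π u < π i}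
        = ∑ b ∈ U.A s, #{π ∈ U.consistent | π u < π b} := by
          rw [sum_congr rfl hsym, sum_const, smul_eq_mul]
      _ = ∑ π ∈ U.consistent, #{b ∈ U.A s | π u < π b} := by
          simp_rw [card_filter]
          exact sum_comm
      _ = ∑ π ∈ U.consistent,
            #{r ∈ Ico (U.blockOffset s) (U.blockOffset s + #(U.A s)) | U.rank π u ≤ r} :=
          sum_congr rfl fun π hπ => card_filter_lt_A_eq hπ hu s
      _ = _ := sum_consistent_comp_rank hu
          (fun q => #{r ∈ Ico (U.blockOffset s) (U.blockOffset s + #(U.A s)) | q ≤ r})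
  have hcard : #U.consistent = d * (#U.ranked + 1) := by
    simpa using sum_consistent_comp_rank hu (fun _ => 1)
  have hgauss := two_mul_sum_range_card_filter_Ico_le (blockOffset_add_card_le s)
  refine Nat.eq_of_mul_eq_mul_left (U.nonempty s).card_pos ?_
  calc #(U.A s) * (2 * (#U.ranked + 1) * #{π ∈ U.consistent | π u < π i})
      = (#U.ranked + 1) * d * (2 * ∑ q ∈ range (#U.ranked + 1),
          #{r ∈ Ico (U.blockOffset s) (U.blockOffset s + #(U.A s)) | q ≤ r}) := by
        rw [← mul_assoc, mul_comm _ (2 * _), mul_assoc, hblock]; ring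
    _ = _ := by rw [hgauss, hcard]; ring

theorem card_filter_unranked_lt_eq {u i : Fin n} {s : Fin U.K} (hu : u ∉ U.ranked)
    (hi : i ∈ U.A s) :
    (#{π ∈ U.consistent | π u < π i} : ℚ) =
      ((U.tau i : ℚ) + ((U.phi i : ℚ) - 1) / 2) / ((#U.ranked : ℚ) + 1) * #U.consistent := by
  have h : (2 * (#U.ranked + 1) * #{π ∈ U.consistent | π u < π i} : ℚ) =
      (2 * U.blockOffset s + #(U.A s) + 1) * #U.consistent := by
    exact_mod_cast two_mul_card_filter_unranked_lt hu hi
  rw [tau_eq_of_mem hi, phi_eq_of_mem hi]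
  field_simp
  push_cast
  linear_combination h

theorem card_filter_lt_eq_half_of_swap {a b : Fin n} (hab : a ≠ b)
    (hswap : ∀ s, ∀ x ∈ U.A s, swap a b x ∈ U.A s) :
    (#{π ∈ U.consistent | π a < π b} : ℚ) = 1 / 2 * #U.consistent := by
  have h : (2 * #{π ∈ U.consistent | π a < π b} : ℚ) = #U.consistent := by
    exact_mod_cast two_mul_card_filter_lt_of_swap hab hswap
  linear_combination h / 2

theorem card_filter_lt_eq_pij (U : TIR n) {i j : Fin n} (hij : i ≠ j) :
    (#{π ∈ U.consistent | π i < π j} : ℚ) = U.pij i j * #U.consistent := by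
  have hsum : (#{π ∈ U.consistent | π i < π j} + #{π ∈ U.consistent | π j < π i} : ℚ) =
      #U.consistent := by
    exact_mod_cast card_filter_lt_add_card_filter_gt hij
  by_cases hi : i ∈ U.ranked <;> by_cases hj : j ∈ U.ranked <;>
    simp only [TIR.pij, hi, hj, if_true, if_false]
  · obtain ⟨s, his⟩ := mem_ranked.mp hi
    obtain ⟨t, hjt⟩ := mem_ranked.mp hj
    rw [tau_eq_of_mem his, tau_eq_of_mem hjt]
    rcases lt_trichotomy s t with hst | rfl | hts
    · have hlt := blockOffset_strictMono hst
      rw [if_neg (by omega), if_pos (by omega), one_mul,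
        filter_true_of_mem fun π hπ => mem_consistent.mp hπ s t hst i his j hjt]
    · rw [if_pos rfl]
      exact card_filter_lt_eq_half_of_swap hij (swap_mem_A_of_mem_A his hjt)
    · have hlt := blockOffset_strictMono hts
      rw [if_neg (by omega), if_neg (by omega), zero_mul, filter_false_of_mem
        fun π hπ => (mem_consistent.mp hπ t s hts j hjt i his).not_gt]
      simp
  · obtain ⟨s, his⟩ := mem_ranked.mp hi
    linear_combination hsum - card_filter_unranked_lt_eq hj his
  · obtain ⟨t, hjt⟩ := mem_ranked.mp hj
    exact card_filter_unranked_lt_eq hi hjt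
  · exact card_filter_lt_eq_half_of_swap hij (swap_mem_A_of_notMem_ranked hi hj)

end TIR

theorem card_filter_fst_lt_snd (n : ℕ) :
    (#{p : Fin n × Fin n | p.1 < p.2} : ℚ) = n * (n - 1) / 2 := by
  have h : #{p : Fin n × Fin n | p.1 < p.2} = ∑ j : Fin n, (j : ℕ) := by
    rw [card_filter, Fintype.sum_prod_type, sum_comm]
    refine sum_congr rfl fun j _ => ?_
    rw [← card_filter, filter_gt_eq_Iio, Fin.card_Iio]
  have hgauss := sum_range_id_mul_two n
  rw [h, Fin.sum_univ_eq_sum_range (fun j => j)]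
  rcases Nat.eq_zero_or_pos n with rfl | hn
  · simp
  · have : ((∑ i ∈ range n, i : ℕ) : ℚ) * 2 = n * ((n - 1 : ℕ) : ℚ) := by
      exact_mod_cast hgauss
    rw [Nat.cast_sub hn] at this
    push_cast at this ⊢
    linear_combination this / 2

theorem sum_sum_kendall {n : ℕ} {S R : Finset (Perm (Fin n))} {f g : Fin n → Fin n → ℚ}
    (hf : ∀ i j, i < j → (#{π ∈ S | π i < π j} : ℚ) = f i j * #S)
    (hg : ∀ i j, i < j → (#{σ ∈ R | σ i < σ j} : ℚ) = g i j * #R) :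
    ∑ π ∈ S, ∑ σ ∈ R, (kendall π σ : ℚ) =
      #S * #R * ∑ p : Fin n × Fin n with p.1 < p.2,
        (1 / 2 - 1 / 2 * ((1 - 2 * f p.1 p.2) * (1 - 2 * g p.1 p.2))) := by
  have hdisc (π σ : Perm (Fin n)) : (kendall π σ : ℚ) = ∑ p : Fin n × Fin n with p.1 < p.2,
      ((if π p.1 < π p.2 then 1 else 0) + (if σ p.1 < σ p.2 then 1 else 0)
        - 2 * (if π p.1 < π p.2 then 1 else 0) * (if σ p.1 < σ p.2 then 1 else 0)) := by
    rw [kendall, ← filter_filter, card_filter, Nat.cast_sum]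
    refine sum_congr rfl fun p _ => ?_
    by_cases h₁ : π p.1 < π p.2 <;> by_cases h₂ : σ p.1 < σ p.2 <;> norm_num [h₁, h₂]
  simp_rw [hdisc]
  rw [sum_comm, mul_sum]
  refine (sum_congr rfl fun σ _ => sum_comm).trans (sum_comm.trans (sum_congr rfl fun p hp => ?_))
  have hlt := (mem_filter.mp hp).2
  simp only [sum_add_distrib, sum_sub_distrib, ← mul_sum, ← sum_mul, sum_const, sum_boole,
    nsmul_eq_mul, hf _ _ hlt, hg _ _ hlt]
  ring

/-- Proposition 3: for tied incomplete rankings `U, V` with consistent sets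
`S = S_U`, `R = S_V`, the average Kendall tau distance satisfies
`(1/(|S||R|)) Σ_{π∈S} Σ_{σ∈R} T(π,σ)
  = n(n−1)/4 − (1/2) Σ_{i<j} (1 − 2p_{ij}(U))(1 − 2p_{ij}(V))`. -/
theorem average_kendall_tied_incomplete (n : ℕ) (U V : TIR n) :
    (1 / ((U.consistent.card : ℚ) * (V.consistent.card : ℚ))) *
        ∑ π ∈ U.consistent, ∑ σ ∈ V.consistent, (kendall π σ : ℚ)
      = (n : ℚ) * ((n : ℚ) - 1) / 4
        - (1 / 2) * ∑ p ∈ Finset.univ.filter (fun p : Fin n × Fin n => p.1 < p.2),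
            (1 - 2 * U.pij p.1 p.2) * (1 - 2 * V.pij p.1 p.2) := by
  have hS : (#U.consistent : ℚ) ≠ 0 := by exact_mod_cast U.consistent_nonempty.card_pos.ne'
  have hR : (#V.consistent : ℚ) ≠ 0 := by exact_mod_cast V.consistent_nonempty.card_pos.ne'
  rw [sum_sum_kendall (fun i j h => U.card_filter_lt_eq_pij h.ne)
      (fun i j h => V.card_filter_lt_eq_pij h.ne),
    sum_sub_distrib, sum_const, nsmul_eq_mul, card_filter_fst_lt_snd, ← mul_sum]
  field_simp
  ring
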